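/- arXiv:2005.03892 — 4 statements merged into one kernel-verified Lean document; each statement's English description precedes it below -/
import Mathlib

section
/- Let F be a d×d real matrix and R ∈ SO(d). Then the Frobenius norm |(F Rᵀ)ᵀ + F Rᵀ)/2 − Id| equals dist(F, SO(d)) + O(|F − R|²); more precisely, there is a universal constant C > 0 such that ||sym(F Rᵀ) − Id| − dist(F, SO(d))| ≤ C |F − R|², where sym(G) = (G + Gᵀ)/2. -/
open Matrix

/-- Frobenius norm of a real matrix. -/
noncomputable def frobNorm {d : ℕ} (F : Matrix (Fin d) (Fin d) ℝ) : ℝ :=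
  Real.sqrt (∑ i, ∑ j, F i j ^ 2)

/-- The special orthogonal group `SO(d)`. -/
def SO (d : ℕ) : Set (Matrix (Fin d) (Fin d) ℝ) :=
  {R | R * Rᵀ = 1 ∧ R.det = 1}

/-- Frobenius distance of `F` to `SO(d)`. -/
noncomputable def distSO {d : ℕ} (F : Matrix (Fin d) (Fin d) ℝ) : ℝ :=
  sInf ((fun Q => frobNorm (F - Q)) '' SO d)

/-!
Put `G = F Rᵀ` and `t = |G - 1| = |F - R|`; right multiplication by `Rᵀ` preserves the Frobenius
norm and `SO(d)`, hence also `dist(·, SO(d))`. For `Q ∈ SO(d)` one has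
`sym Q - 1 = -(1 - Q)(1 - Q)ᵀ / 2`, so `|sym G - 1| ≤ |G - Q| + (|G - Q| + t)² / 2`, which bounds
the distance from below. Conversely, if `K` is the skew part of `G`, so that
`G - (1 + K) = sym G - 1`, the Cayley transform of `K / 2` is a rotation within `|K|² ≤ t²` of
`1 + K`.
-/

attribute [local instance] Matrix.frobeniusNormedAddCommGroup Matrix.frobeniusNormedSpace
  Matrix.frobeniusNormedRing

theorem norm_sub_one_sub_two_nsmul_le_of_mul_one_sub_eq {𝕜 : Type*} [NormedRing 𝕜]
    {Q A : 𝕜} (hQ : Q * (1 - A) = 1 + A) (hA : ‖A‖ ≤ 1 / 2) :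
    ‖Q - 1 - 2 • A‖ ≤ 4 * ‖A‖ ^ 2 := by
  have hE : Q - 1 - 2 • A = (Q - 1) * A := by
    have hQA : Q * A = Q - (1 + A) := by rw [← hQ, mul_sub, mul_one]; abel
    rw [sub_one_mul, hQA, two_nsmul]
    abel
  have hE_le : ‖Q - 1 - 2 • A‖ ≤ ‖Q - 1‖ * ‖A‖ := hE ▸ norm_mul_le _ _
  have hQ_le : ‖Q - 1‖ ≤ 4 * ‖A‖ := by
    have : ‖Q - 1‖ ≤ ‖Q - 1 - 2 • A‖ + 2 * ‖A‖ :=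
      calc ‖Q - 1‖ = ‖(Q - 1 - 2 • A) + 2 • A‖ := by rw [sub_add_cancel]
        _ ≤ ‖Q - 1 - 2 • A‖ + ‖2 • A‖ := norm_add_le _ _
        _ ≤ ‖Q - 1 - 2 • A‖ + 2 * ‖A‖ := by gcongr; exact_mod_cast norm_nsmul_le (n := 2) (a := A)
    nlinarith [norm_nonneg (Q - 1)]
  calc ‖Q - 1 - 2 • A‖ ≤ ‖Q - 1‖ * ‖A‖ := hE_le
    _ ≤ 4 * ‖A‖ * ‖A‖ := by gcongr
    _ = 4 * ‖A‖ ^ 2 := by ring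

namespace Matrix

variable {m n : Type*}

noncomputable def symPart (M : Matrix n n ℝ) : Matrix n n ℝ := (1 / 2 : ℝ) • (M + Mᵀ)

noncomputable def skewPart (M : Matrix n n ℝ) : Matrix n n ℝ := (1 / 2 : ℝ) • (M - Mᵀ)

theorem symPart_add_skewPart (M : Matrix n n ℝ) : symPart M + skewPart M = M := by
  unfold symPart skewPart; module

theorem symPart_sub (M N : Matrix n n ℝ) : symPart (M - N) = symPart M - symPart N := by
  unfold symPart; rw [transpose_sub]; module

theorem transpose_skewPart (M : Matrix n n ℝ) : (skewPart M)ᵀ = -skewPart M := by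
  unfold skewPart; rw [transpose_smul, transpose_sub, transpose_transpose]; module

theorem symPart_one [DecidableEq n] : symPart (1 : Matrix n n ℝ) = 1 := by
  unfold symPart; rw [transpose_one]; module

theorem skewPart_sub_one [DecidableEq n] (M : Matrix n n ℝ) : skewPart (M - 1) = skewPart M := by
  unfold skewPart; rw [transpose_sub, transpose_one]; module

variable [Fintype m] [Fintype n]

theorem frobenius_norm_sq_eq_trace_mul_transpose (M : Matrix m n ℝ) :
    ‖M‖ ^ 2 = trace (M * Mᵀ) := by
  rw [frobenius_norm_def, ← Real.rpow_natCast, ← Real.rpow_mul (by positivity)]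
  norm_num
  simp [trace, mul_apply, sq]

theorem frobenius_norm_mul_of_mul_transpose_eq_one [DecidableEq n] (A : Matrix m n ℝ)
    {R : Matrix n n ℝ} (hR : R * Rᵀ = 1) : ‖A * R‖ = ‖A‖ := by
  have hsq : ‖A * R‖ ^ 2 = ‖A‖ ^ 2 := by
    rw [frobenius_norm_sq_eq_trace_mul_transpose, frobenius_norm_sq_eq_trace_mul_transpose,
      transpose_mul, Matrix.mul_assoc, ← Matrix.mul_assoc R, hR, Matrix.one_mul]
  exact (pow_left_inj₀ (norm_nonneg _) (norm_nonneg _) two_ne_zero).mp hsq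

theorem norm_symPart_le (M : Matrix n n ℝ) : ‖symPart M‖ ≤ ‖M‖ := by
  calc ‖symPart M‖ ≤ 1 / 2 * (‖M‖ + ‖Mᵀ‖) := by
        rw [symPart, norm_smul, Real.norm_of_nonneg (by norm_num)]; gcongr; exact norm_add_le _ _
    _ = ‖M‖ := by rw [frobenius_norm_transpose]; ring

theorem norm_skewPart_le (M : Matrix n n ℝ) : ‖skewPart M‖ ≤ ‖M‖ := by
  calc ‖skewPart M‖ ≤ 1 / 2 * (‖M‖ + ‖Mᵀ‖) := by
        rw [skewPart, norm_smul, Real.norm_of_nonneg (by norm_num)]; gcongr; exact norm_sub_le _ _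
    _ = ‖M‖ := by rw [frobenius_norm_transpose]; ring

theorem norm_symPart_sub_one_le_of_mul_transpose_eq_one [DecidableEq n] {P : Matrix n n ℝ}
    (hP : P * Pᵀ = 1) : ‖symPart P - 1‖ ≤ ‖P - 1‖ ^ 2 / 2 := by
  have hid : symPart P - 1 = -((1 / 2 : ℝ) • ((1 - P) * (1 - P)ᵀ)) := by
    rw [symPart, transpose_sub, transpose_one, sub_mul, mul_sub, mul_sub, Matrix.one_mul,
      Matrix.mul_one, Matrix.one_mul, hP]
    module
  calc ‖symPart P - 1‖ = 1 / 2 * ‖(1 - P) * (1 - P)ᵀ‖ := by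
        rw [hid, norm_neg, norm_smul, Real.norm_of_nonneg (by norm_num)]
    _ ≤ 1 / 2 * (‖1 - P‖ * ‖(1 - P)ᵀ‖) := by gcongr; exact norm_mul_le _ _
    _ = ‖P - 1‖ ^ 2 / 2 := by rw [frobenius_norm_transpose, norm_sub_rev]; ring

noncomputable def cayley [DecidableEq n] (A : Matrix n n ℝ) : Matrix n n ℝ := (1 + A) * (1 - A)⁻¹

theorem cayley_mul_one_sub [DecidableEq n] {A : Matrix n n ℝ} (h : IsUnit (1 - A).det) :
    cayley A * (1 - A) = 1 + A :=
  nonsing_inv_mul_cancel_right _ _ h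

theorem isUnit_det_one_sub_of_norm_lt_one [DecidableEq n] {A : Matrix n n ℝ} (h : ‖A‖ < 1) :
    IsUnit (1 - A).det := by
  rw [← isUnit_iff_isUnit_det, ← Units.val_oneSub A h]
  exact Units.isUnit _

end Matrix

variable {d : ℕ}

theorem frobNorm_eq_norm (F : Matrix (Fin d) (Fin d) ℝ) : frobNorm F = ‖F‖ := by
  rw [frobNorm, frobenius_norm_def, Real.sqrt_eq_rpow]
  simp [Real.norm_eq_abs, sq_abs]

theorem one_mem_SO : (1 : Matrix (Fin d) (Fin d) ℝ) ∈ SO d :=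
  ⟨by rw [transpose_one, Matrix.one_mul], det_one⟩

theorem mul_mem_SO {P Q : Matrix (Fin d) (Fin d) ℝ} (hP : P ∈ SO d) (hQ : Q ∈ SO d) :
    P * Q ∈ SO d := by
  refine ⟨?_, by rw [det_mul, hP.2, hQ.2, mul_one]⟩
  rw [transpose_mul, Matrix.mul_assoc, ← Matrix.mul_assoc Q, hQ.1, Matrix.one_mul, hP.1]

theorem transpose_mem_SO {R : Matrix (Fin d) (Fin d) ℝ} (hR : R ∈ SO d) : Rᵀ ∈ SO d :=
  ⟨by rw [transpose_transpose]; exact mul_eq_one_comm.mp hR.1, by rw [det_transpose]; exact hR.2⟩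

theorem cayley_mem_SO {A : Matrix (Fin d) (Fin d) ℝ} (hA : Aᵀ = -A) (h : IsUnit (1 - A).det) :
    cayley A ∈ SO d := by
  have hT : (1 - A)ᵀ = 1 + A := by rw [transpose_sub, transpose_one, hA, sub_neg_eq_add]
  have hT' : (1 + A)ᵀ = 1 - A := by rw [← hT, transpose_transpose]
  have hdet : (1 + A).det = (1 - A).det := by rw [← hT, det_transpose]
  have hU : IsUnit (1 + A).det := hdet ▸ h
  have hcomm : (1 - A) * (1 + A) = (1 + A) * (1 - A) := by noncomm_ring
  refine ⟨mul_eq_one_comm.mp ?_, ?_⟩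
  · rw [cayley, transpose_mul, transpose_nonsing_inv, hT, hT', Matrix.mul_assoc,
      ← Matrix.mul_assoc (1 - A), hcomm, Matrix.mul_assoc, mul_nonsing_inv _ h, Matrix.mul_one,
      nonsing_inv_mul _ hU]
  · rw [cayley, det_mul, det_nonsing_inv, hdet, Ring.mul_inverse_cancel _ h]

theorem exists_mem_SO_norm_sub_one_sub_le {K : Matrix (Fin d) (Fin d) ℝ} (hK : Kᵀ = -K)
    (hK1 : ‖K‖ ≤ 1) : ∃ Q ∈ SO d, ‖Q - 1 - K‖ ≤ ‖K‖ ^ 2 := by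
  set A : Matrix (Fin d) (Fin d) ℝ := (1 / 2 : ℝ) • K
  have hA : ‖A‖ = ‖K‖ / 2 := by
    rw [norm_smul, Real.norm_of_nonneg (by norm_num)]; ring
  have hAT : Aᵀ = -A := by rw [transpose_smul, hK, smul_neg]
  have hU : IsUnit (1 - A).det := isUnit_det_one_sub_of_norm_lt_one (by linarith)
  have h2A : 2 • A = K := by module
  refine ⟨cayley A, cayley_mem_SO hAT hU, ?_⟩
  calc ‖cayley A - 1 - K‖ ≤ 4 * ‖A‖ ^ 2 :=
        h2A ▸ norm_sub_one_sub_two_nsmul_le_of_mul_one_sub_eq (cayley_mul_one_sub hU)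
          (by linarith)
    _ = ‖K‖ ^ 2 := by rw [hA]; ring

theorem distSO_le (F : Matrix (Fin d) (Fin d) ℝ) {Q : Matrix (Fin d) (Fin d) ℝ} (hQ : Q ∈ SO d) :
    distSO F ≤ ‖F - Q‖ :=
  frobNorm_eq_norm (F - Q) ▸
    csInf_le ⟨0, by rintro _ ⟨P, -, rfl⟩; exact Real.sqrt_nonneg _⟩ ⟨Q, hQ, rfl⟩

theorem le_distSO {F : Matrix (Fin d) (Fin d) ℝ} {c : ℝ} (h : ∀ Q ∈ SO d, c ≤ ‖F - Q‖) :
    c ≤ distSO F :=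
  le_csInf ⟨_, 1, one_mem_SO, rfl⟩ <| by
    rintro _ ⟨Q, hQ, rfl⟩
    simpa only [frobNorm_eq_norm] using h Q hQ

theorem distSO_mul_transpose (F : Matrix (Fin d) (Fin d) ℝ) {R : Matrix (Fin d) (Fin d) ℝ}
    (hR : R ∈ SO d) : distSO (F * Rᵀ) = distSO F := by
  have hRT : Rᵀ * Rᵀᵀ = 1 := (transpose_mem_SO hR).1
  refine le_antisymm (le_distSO fun Q hQ => ?_) (le_distSO fun Q hQ => ?_)
  · calc distSO (F * Rᵀ) ≤ ‖F * Rᵀ - Q * Rᵀ‖ := distSO_le _ (mul_mem_SO hQ (transpose_mem_SO hR))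
      _ = ‖F - Q‖ := by rw [← sub_mul, frobenius_norm_mul_of_mul_transpose_eq_one _ hRT]
  · calc distSO F ≤ ‖F - Q * R‖ := distSO_le _ (mul_mem_SO hQ hR)
      _ = ‖F * Rᵀ - Q‖ := by
        rw [← frobenius_norm_mul_of_mul_transpose_eq_one _ hRT, sub_mul, Matrix.mul_assoc, hR.1,
          Matrix.mul_one]

theorem norm_symPart_sub_one_le_distSO_add (G : Matrix (Fin d) (Fin d) ℝ) :
    ‖symPart G - 1‖ ≤ distSO G + 2 * ‖G - 1‖ ^ 2 := by
  set t := ‖G - 1‖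
  have hS : ‖symPart G - 1‖ ≤ t := by
    rw [← symPart_one, ← symPart_sub]
    exact norm_symPart_le (G - 1)
  suffices h : ∀ Q ∈ SO d, ‖symPart G - 1‖ - 2 * t ^ 2 ≤ ‖G - Q‖ by
    have := le_distSO h
    linarith
  intro Q hQ
  set x := ‖G - Q‖
  have hSQ : ‖symPart G - 1‖ ≤ x + ‖Q - 1‖ ^ 2 / 2 :=
    calc ‖symPart G - 1‖ = ‖symPart (G - Q) + (symPart Q - 1)‖ := by
          rw [symPart_sub]; abel_nf
      _ ≤ x + ‖Q - 1‖ ^ 2 / 2 := (norm_add_le _ _).trans <|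
          add_le_add (norm_symPart_le _) (norm_symPart_sub_one_le_of_mul_transpose_eq_one hQ.1)
  have hQ1 : ‖Q - 1‖ ≤ x + t := by
    simpa only [norm_sub_rev Q G] using norm_sub_le_norm_sub_add_norm_sub Q G 1
  rcases le_or_gt x t with hxt | htx
  · nlinarith [norm_nonneg (Q - 1), norm_nonneg (G - Q)]
  · nlinarith

theorem distSO_le_norm_symPart_sub_one_add (G : Matrix (Fin d) (Fin d) ℝ) :
    distSO G ≤ ‖symPart G - 1‖ + ‖G - 1‖ ^ 2 := by
  set t := ‖G - 1‖
  rcases le_or_gt t 1 with ht | ht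
  · have hK : ‖skewPart G‖ ≤ t := skewPart_sub_one G ▸ norm_skewPart_le (G - 1)
    obtain ⟨Q, hQ, hQK⟩ :=
      exists_mem_SO_norm_sub_one_sub_le (transpose_skewPart G) (hK.trans ht)
    calc distSO G ≤ ‖G - Q‖ := distSO_le G hQ
      _ = ‖(symPart G - 1) - (Q - 1 - skewPart G)‖ := by
          conv_lhs => rw [← symPart_add_skewPart G]
          abel_nf
      _ ≤ ‖symPart G - 1‖ + ‖skewPart G‖ ^ 2 := (norm_sub_le _ _).trans (by gcongr)
      _ ≤ ‖symPart G - 1‖ + t ^ 2 := by gcongr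
  · calc distSO G ≤ t := by simpa using distSO_le G one_mem_SO
      _ ≤ ‖symPart G - 1‖ + t ^ 2 := by nlinarith [norm_nonneg (symPart G - 1)]

/-- for `F` a `d×d` matrix and `R ∈ SO(d)`,
`| |sym(F Rᵀ) − Id| − dist(F, SO(d)) | ≤ C |F − R|²` with a universal constant `C > 0`. -/
theorem stmt0 :
    ∃ C : ℝ, 0 < C ∧ ∀ (d : ℕ), 2 ≤ d → ∀ (F R : Matrix (Fin d) (Fin d) ℝ), R ∈ SO d →
      |frobNorm ((1 / 2 : ℝ) • (F * Rᵀ + (F * Rᵀ)ᵀ) - 1) - distSO F|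
        ≤ C * frobNorm (F - R) ^ 2 := by
  refine ⟨2, two_pos, fun d _ F R hR => ?_⟩
  set G := F * Rᵀ
  have hdist : distSO F = distSO G := (distSO_mul_transpose F hR).symm
  have hnorm : frobNorm (F - R) = ‖G - 1‖ := by
    rw [frobNorm_eq_norm, ← frobenius_norm_mul_of_mul_transpose_eq_one _ (transpose_mem_SO hR).1,
      sub_mul, hR.1]
  change |frobNorm (symPart G - 1) - distSO F| ≤ 2 * frobNorm (F - R) ^ 2
  rw [frobNorm_eq_norm, hdist, hnorm, abs_le]
  constructor <;>
    linarith [norm_symPart_sub_one_le_distSO_add G, distSO_le_norm_symPart_sub_one_add G,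
      sq_nonneg ‖G - 1‖]
end

section
/- Let A = Id and B = diag(1,…,1,1+κ) with κ > 0, in dimension d ≥ 2. Suppose W(F) = φ(dist(F, SO(d)A), dist(F, SO(d)B)) where φ: [0,∞)² → [0,∞) is nondecreasing in each variable. Then for every d×d matrix F one has W(F) ≥ W(Id + (|F e_d| − 1) e_{dd}). -/
open Matrix

/-- Frobenius distance of `F` to a set of matrices. -/
noncomputable def frobDistToSet {d : ℕ} (F : Matrix (Fin d) (Fin d) ℝ)
    (S : Set (Matrix (Fin d) (Fin d) ℝ)) : ℝ :=
  sInf ((fun Q => frobNorm (F - Q)) '' S)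

lemma abs_sqrt_sub_sqrt {m : ℕ} (v w : Fin m → ℝ) :
    |Real.sqrt (∑ i, v i ^ 2) - Real.sqrt (∑ i, w i ^ 2)| ≤ Real.sqrt (∑ i, (v i - w i) ^ 2) := by
  have h := abs_norm_sub_norm_le ((WithLp.equiv 2 (Fin m → ℝ)).symm v)
      ((WithLp.equiv 2 (Fin m → ℝ)).symm w)
  simpa [EuclideanSpace.norm_eq, Real.norm_eq_abs, sq_abs] using h

lemma frobNorm_nonneg {m : ℕ} (F : Matrix (Fin m) (Fin m) ℝ) : 0 ≤ frobNorm F :=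
  Real.sqrt_nonneg _

lemma frobNorm_smul_std {m : ℕ} (d : Fin m) (c : ℝ) :
    frobNorm (c • Matrix.single d d (1 : ℝ)) = |c| := by
  unfold frobNorm
  have h : ∀ i j : Fin m, (c • Matrix.single d d (1 : ℝ)) i j ^ 2
      = if d = j then (if d = i then c ^ 2 else 0) else 0 := by
    intro i j
    simp only [Matrix.smul_apply, Matrix.single, Matrix.of_apply, smul_eq_mul]
    by_cases hi : d = i <;> by_cases hj : d = j <;> simp [hi, hj] <;> ring
  simp only [h, Finset.sum_ite_eq, Finset.mem_univ, if_true]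
  exact Real.sqrt_sq_eq_abs c

/-- Frobenius norm of a difference dominates the column difference. -/
lemma col_le_frobNorm {m : ℕ} (F Q : Matrix (Fin m) (Fin m) ℝ) (d : Fin m) :
    |Real.sqrt (∑ i, F i d ^ 2) - Real.sqrt (∑ i, Q i d ^ 2)| ≤ frobNorm (F - Q) := by
  refine le_trans (abs_sqrt_sub_sqrt _ _) ?_
  apply Real.sqrt_le_sqrt
  apply Finset.sum_le_sum
  intro i _
  have h := Finset.single_le_sum (f := fun j => ((F - Q) i j) ^ 2)
    (fun j _ => sq_nonneg _) (Finset.mem_univ d)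
  simpa [Matrix.sub_apply] using h

/-- if `W(F) = φ(dist(F, SO(d)A), dist(F, SO(d)B))` with `φ : [0,∞)² → [0,∞)`
nondecreasing in each variable, `A = Id`, `B = diag(1,…,1,1+κ)`, `κ > 0`, then
`W(F) ≥ W(Id + (|F e_d| − 1) e_{dd})` for every `d×d` matrix `F` (here `d = n+2 ≥ 2`). -/
theorem stmt1 (n : ℕ) (κ : ℝ) (hκ : 0 < κ)
    (A B : Matrix (Fin (n + 2)) (Fin (n + 2)) ℝ)
    (hA : A = 1)
    (hB : B = 1 + κ • Matrix.single (Fin.last (n + 1)) (Fin.last (n + 1)) 1)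
    (φ : ℝ → ℝ → ℝ)
    (hφ0 : ∀ t₁ t₂, 0 ≤ t₁ → 0 ≤ t₂ → 0 ≤ φ t₁ t₂)
    (hφ1 : ∀ t₂, MonotoneOn (fun t₁ => φ t₁ t₂) (Set.Ici 0))
    (hφ2 : ∀ t₁, MonotoneOn (φ t₁) (Set.Ici 0))
    (W : Matrix (Fin (n + 2)) (Fin (n + 2)) ℝ → ℝ)
    (hW : ∀ F, W F = φ (frobDistToSet F ((fun R => R * A) '' SO (n + 2)))
                       (frobDistToSet F ((fun R => R * B) '' SO (n + 2)))) :
    ∀ F : Matrix (Fin (n + 2)) (Fin (n + 2)) ℝ,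
      W F ≥ W (1 + (Real.sqrt (∑ i, F i (Fin.last (n + 1)) ^ 2) - 1) •
        Matrix.single (Fin.last (n + 1)) (Fin.last (n + 1)) 1) := by
  intro F
  set d : Fin (n + 2) := Fin.last (n + 1) with hd
  set s : ℝ := Real.sqrt (∑ i, F i d ^ 2) with hs
  set G : Matrix (Fin (n + 2)) (Fin (n + 2)) ℝ :=
    1 + (s - 1) • Matrix.single d d 1 with hG
  set SA : Set (Matrix (Fin (n + 2)) (Fin (n + 2)) ℝ) := (fun R => R * A) '' SO (n + 2) with hSA
  set SB : Set (Matrix (Fin (n + 2)) (Fin (n + 2)) ℝ) := (fun R => R * B) '' SO (n + 2) with hSB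
  have h1SO : (1 : Matrix (Fin (n + 2)) (Fin (n + 2)) ℝ) ∈ SO (n + 2) := by
    constructor <;> simp [Matrix.transpose_one]
  -- column of elements of SO has unit norm
  have hcolR : ∀ R ∈ SO (n + 2), ∑ i, R i d ^ 2 = 1 := by
    intro R hR
    have h2 : Rᵀ * R = 1 := mul_eq_one_comm.mp hR.1
    have := congrArg (fun M => M d d) h2
    simpa [Matrix.mul_apply, Matrix.transpose_apply, sq, Matrix.one_apply] using this
  -- column of R*B
  have hcolRB : ∀ R ∈ SO (n + 2), ∑ i, (R * B) i d ^ 2 = (1 + κ) ^ 2 := by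
    intro R hR
    have hentry : ∀ i, (R * B) i d = (1 + κ) * R i d := by
      intro i
      rw [hB, Matrix.mul_add, Matrix.mul_one, Matrix.mul_smul]
      simp only [Matrix.add_apply, Matrix.smul_apply, smul_eq_mul,
        Matrix.mul_single_apply_same]
      ring
    calc ∑ i, (R * B) i d ^ 2 = ∑ i, (1 + κ) ^ 2 * R i d ^ 2 := by
          refine Finset.sum_congr rfl fun i _ => ?_; rw [hentry i]; ring
      _ = (1 + κ) ^ 2 * ∑ i, R i d ^ 2 := by rw [Finset.mul_sum]
      _ = (1 + κ) ^ 2 := by rw [hcolR R hR, mul_one]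
  -- nonneg / bddBelow of image sets
  have hbdd : ∀ (H : Matrix (Fin (n + 2)) (Fin (n + 2)) ℝ)
      (S : Set (Matrix (Fin (n + 2)) (Fin (n + 2)) ℝ)),
      BddBelow ((fun Q => frobNorm (H - Q)) '' S) := by
    intro H S
    exact ⟨0, fun x ⟨Q, _, hQ⟩ => hQ ▸ frobNorm_nonneg _⟩
  have hnonneg : ∀ (H : Matrix (Fin (n + 2)) (Fin (n + 2)) ℝ)
      (S : Set (Matrix (Fin (n + 2)) (Fin (n + 2)) ℝ)), S.Nonempty →
      0 ≤ frobDistToSet H S := by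
    intro H S hS
    exact le_csInf (hS.image _) (fun x ⟨Q, _, hQ⟩ => hQ ▸ frobNorm_nonneg _)
  have hSAne : SA.Nonempty := ⟨1 * A, 1, h1SO, rfl⟩
  have hSBne : SB.Nonempty := ⟨1 * B, 1, h1SO, rfl⟩
  have hs0 : 0 ≤ s := Real.sqrt_nonneg _
  -- lower bound for F against SA
  have hFA : |s - 1| ≤ frobDistToSet F SA := by
    refine le_csInf (hSAne.image _) ?_
    rintro b ⟨Q, ⟨R, hR, rfl⟩, rfl⟩
    have h := col_le_frobNorm F (R * A) d
    have hcol : Real.sqrt (∑ i, (R * A) i d ^ 2) = 1 := by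
      rw [hA, Matrix.mul_one, hcolR R hR, Real.sqrt_one]
    rwa [hcol, ← hs] at h
  -- lower bound for F against SB
  have hFB : |s - (1 + κ)| ≤ frobDistToSet F SB := by
    refine le_csInf (hSBne.image _) ?_
    rintro b ⟨Q, ⟨R, hR, rfl⟩, rfl⟩
    have h := col_le_frobNorm F (R * B) d
    have hcol : Real.sqrt (∑ i, (R * B) i d ^ 2) = 1 + κ := by
      rw [hcolRB R hR, Real.sqrt_sq (by linarith)]
    rwa [hcol, ← hs] at h
  -- upper bound for G against SA
  have hGA : frobDistToSet G SA ≤ |s - 1| := by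
    refine csInf_le (hbdd G SA) ⟨1 * A, ⟨1, h1SO, rfl⟩, ?_⟩
    show frobNorm (G - 1 * A) = |s - 1|
    rw [hA, Matrix.mul_one, hG, add_sub_cancel_left, frobNorm_smul_std]
  -- upper bound for G against SB
  have hGB : frobDistToSet G SB ≤ |s - (1 + κ)| := by
    refine csInf_le (hbdd G SB) ⟨1 * B, ⟨1, h1SO, rfl⟩, ?_⟩
    have hdiff : G - 1 * B = (s - (1 + κ)) • Matrix.single d d (1 : ℝ) := by
      rw [Matrix.one_mul, hB, hG, add_sub_add_left_eq_sub, ← sub_smul]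
      congr 1
      ring
    show frobNorm (G - 1 * B) = |s - (1 + κ)|
    rw [hdiff, frobNorm_smul_std]
  -- chain the bounds
  have hAle : frobDistToSet G SA ≤ frobDistToSet F SA := le_trans hGA hFA
  have hBle : frobDistToSet G SB ≤ frobDistToSet F SB := le_trans hGB hFB
  have hGA0 : (0 : ℝ) ≤ frobDistToSet G SA := hnonneg G SA hSAne
  have hGB0 : (0 : ℝ) ≤ frobDistToSet G SB := hnonneg G SB hSBne
  have hFA0 : (0 : ℝ) ≤ frobDistToSet F SA := hnonneg F SA hSAne
  have hFB0 : (0 : ℝ) ≤ frobDistToSet F SB := hnonneg F SB hSBne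
  rw [ge_iff_le, hW, hW]
  calc φ (frobDistToSet G SA) (frobDistToSet G SB)
      ≤ φ (frobDistToSet F SA) (frobDistToSet G SB) :=
        hφ1 (frobDistToSet G SB) hGA0 hFA0 hAle
    _ ≤ φ (frobDistToSet F SA) (frobDistToSet F SB) :=
        hφ2 (frobDistToSet F SA) hGB0 hFB0 hBle
end

section
/- Let W: M^{d×d} → [0,∞) be C² on V = {F : dist(F, SO(d){A,B}) < δ_W} with W = 0, DW = 0 on SO(d){A,B}, coercivity W(F) ≥ c₁ dist²(F, SO(d){A,B}) on M^{d×d}, and DW Lipschitz on V. Then for 0 < δ ≤ δ_W/2 there are constants C > 0 (depending only on W) and ρ_δ > 0 with ρ_δ → 0 as δ → 0 such that W(F + G) ≤ W(F) + C √(W(F)) |G| + ½ D²W(F)[G,G] + ρ_δ |G|² for all F ∈ V_δ and G with |G| < δ, where V_δ = {F : dist(F, SO(d){A,B}) < δ}. -/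
open Matrix Metric Filter Topology

attribute [local instance] Matrix.frobeniusNormedAddCommGroup Matrix.frobeniusNormedSpace

/-!
Since `DW` is `L`-Lipschitz and vanishes on the compact set of wells `K`, comparing with a nearest
well gives `‖DW F‖ ≤ L dist(F, K) ≤ (L / √c₁) √(W F)` by coercivity; this is the first-order term.
By Taylor's formula along `[F, F + G]`, the second-order remainder is at most
`sup ‖D²W y - D²W F‖ · |G|²` over the segment. For `4δ ≤ δ_W` the segment stays in the compact
set `dist(·, K) ≤ δ_W / 2`, on which `D²W` is uniformly continuous, so the supremum is bounded by a
modulus of continuity `ω(δ) → 0`; for larger `δ` it is at most `2L`, as `‖D²W‖ ≤ L` on `V`.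
-/

open Set

lemma frobenius_norm_of_mem_SO {d : ℕ} {R : Matrix (Fin d) (Fin d) ℝ} (hR : R ∈ SO d) :
    ‖R‖ = √d := by
  have hrow : ∀ i, ∑ j, R i j ^ 2 = 1 := fun i => by
    simpa [Matrix.mul_apply, Matrix.one_apply, sq] using congrFun (congrFun hR.1 i) i
  simp [frobenius_norm_def, hrow, Real.sqrt_eq_rpow]

lemma isCompact_SO (d : ℕ) : IsCompact (SO d) :=
  Metric.isCompact_of_isClosed_isBounded
    ((isClosed_eq (by fun_prop) continuous_const).inter
      (isClosed_eq (by fun_prop) continuous_const))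
    (isBounded_iff_forall_norm_le.2 ⟨√d, fun _ hR => (frobenius_norm_of_mem_SO hR).le⟩)

section Taylor

variable {E : Type*} [NormedAddCommGroup E] [NormedSpace ℝ E]

lemma hasFDerivAt_half_apply_sub_sub {B : E →L[ℝ] E →L[ℝ] ℝ} (hB : ∀ v w, B v w = B w v)
    (x y : E) : HasFDerivAt (fun z => 1 / 2 * B (z - x) (z - x)) (B (y - x)) y := by
  have hu : HasFDerivAt (fun z : E => z - x) (ContinuousLinearMap.id ℝ E) y :=
    (hasFDerivAt_id y).sub_const x
  refine (((B.hasFDerivAt.comp y hu).clm_apply hu).const_mul (1 / 2 : ℝ)).congr_fderiv ?_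
  ext v
  simp only [one_div, Function.comp_apply, map_sub, ContinuousLinearMap.comp_id, smul_add,
    _root_.add_apply, _root_.smul_apply, _root_.sub_apply, smul_eq_mul,
    ContinuousLinearMap.flip_apply, hB v]
  ring

theorem abs_sub_taylor_two_le {f : E → ℝ} {f' : E → E →L[ℝ] ℝ} {f'' : E → E →L[ℝ] E →L[ℝ] ℝ}
    {U : Set E} {x h : E} {ε : ℝ} (hU : IsOpen U) (hxh : segment ℝ x (x + h) ⊆ U)
    (hf : ∀ y ∈ U, HasFDerivAt f (f' y) y) (hf' : ∀ y ∈ U, HasFDerivAt f' (f'' y) y)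
    (hε : ∀ y ∈ segment ℝ x (x + h), ‖f'' y - f'' x‖ ≤ ε) :
    |f (x + h) - f x - f' x h - 1 / 2 * f'' x h h| ≤ ε * ‖h‖ ^ 2 := by
  have hx : x ∈ segment ℝ x (x + h) := left_mem_segment ℝ x (x + h)
  have hε0 : 0 ≤ ε := le_trans (norm_nonneg (f'' x - f'' x)) (hε x hx)
  have hsymm : ∀ v w, f'' x v w = f'' x w v :=
    second_derivative_symmetric_of_eventually_of_real
      (eventually_of_mem (hU.mem_nhds (hxh hx)) hf) (hf' x (hxh hx))
  have hf'_taylor : ∀ y ∈ segment ℝ x (x + h), ‖f' y - f'' x (y - x) - f' x‖ ≤ ε * ‖h‖ :=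
    fun y hy => by
      rw [sub_right_comm]
      exact ((convex_segment _ _).norm_image_sub_le_of_norm_hasFDerivWithin_le'
        (fun z hz => (hf' z (hxh hz)).hasFDerivWithinAt) hε hx hy).trans
        (mul_le_mul_of_nonneg_left (by simpa using norm_sub_le_of_mem_segment hy) hε0)
  have hg := (convex_segment _ _).norm_image_sub_le_of_norm_hasFDerivWithin_le'
    (f := fun y => f y - 1 / 2 * f'' x (y - x) (y - x))
    (fun y hy => ((hf y (hxh hy)).sub
      (hasFDerivAt_half_apply_sub_sub hsymm x y)).hasFDerivWithinAt)
    hf'_taylor hx (right_mem_segment ℝ x (x + h))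
  simp only [add_sub_cancel_left, sub_self, map_zero, mul_zero, sub_zero, Real.norm_eq_abs] at hg
  rw [sq, ← mul_assoc]
  convert hg using 2
  ring

end Taylor

theorem IsCompact.exists_modulus_of_continuousOn {α β : Type*} [PseudoMetricSpace α]
    [PseudoMetricSpace β] {s : Set α} {g : α → β} (hs : IsCompact s) (hg : ContinuousOn g s) :
    ∃ ω : ℝ → ℝ, (∀ t, 0 ≤ ω t) ∧ Tendsto ω (𝓝[>] 0) (𝓝 0) ∧
      ∀ t, ∀ x ∈ s, ∀ y ∈ s, dist x y ≤ t → dist (g x) (g y) ≤ ω t := by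
  set osc : ℝ → Set ℝ := fun t =>
    insert 0 ((fun p : α × α => dist (g p.1) (g p.2)) '' {p ∈ s ×ˢ s | dist p.1 p.2 ≤ t})
  have hbdd : ∀ t, BddAbove (osc t) := fun t =>
    (((hs.prod hs).image_of_continuousOn
      (continuous_dist.comp_continuousOn
        ((hg.comp continuousOn_fst fun _ hp => (mem_prod.1 hp).1).prodMk
          (hg.comp continuousOn_snd fun _ hp => (mem_prod.1 hp).2)))).bddAbove.insert 0).mono
      (insert_subset_insert (image_mono (sep_subset _ _)))
  refine ⟨fun t => sSup (osc t), fun t => le_csSup (hbdd t) (mem_insert _ _), ?_,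
    fun t x hx y hy hxy => le_csSup (hbdd t) (mem_insert_of_mem _ ⟨(x, y), ⟨⟨hx, hy⟩, hxy⟩, rfl⟩)⟩
  rw [Metric.tendsto_nhdsWithin_nhds]
  intro ε hε
  obtain ⟨η, hη, hηε⟩ := Metric.uniformContinuousOn_iff.1
    (hs.uniformContinuousOn_of_continuous hg) (ε / 2) (half_pos hε)
  refine ⟨η, hη, fun t (ht : 0 < t) htη => ?_⟩
  rw [Real.dist_eq, sub_zero, abs_of_pos ht] at htη
  have hle : sSup (osc t) ≤ ε / 2 := by
    refine csSup_le (insert_nonempty _ _) ?_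
    rintro _ (rfl | ⟨p, ⟨⟨hp1, hp2⟩, hpt⟩, rfl⟩)
    · positivity
    · exact (hηε _ hp1 _ hp2 (hpt.trans_lt htη)).le
  rw [Real.dist_eq, sub_zero, abs_of_nonneg (le_csSup (hbdd t) (mem_insert _ _))]
  linarith

lemma mem_cthickening_iff_infDist_le {α : Type*} [PseudoMetricSpace α] {K : Set α}
    (hK : K.Nonempty) {r : ℝ} (hr : 0 ≤ r) {x : α} :
    x ∈ cthickening r K ↔ infDist x K ≤ r := by
  rw [mem_cthickening_iff, infDist, ENNReal.le_ofReal_iff_toReal_le (infEDist_ne_top hK) hr]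

lemma norm_le_mul_infDist_of_eq_zero {E F : Type*} [SeminormedAddCommGroup E]
    [SeminormedAddCommGroup F] {K : Set E} {f : E → F} {L : ℝ} {x : E} (hK : IsCompact K)
    (hKne : K.Nonempty) (hf0 : ∀ y ∈ K, f y = 0) (hf : ∀ y ∈ K, ‖f x - f y‖ ≤ L * ‖x - y‖) :
    ‖f x‖ ≤ L * infDist x K := by
  obtain ⟨P, hP, hxP⟩ := hK.exists_infDist_eq_dist hKne x
  simpa [hf0 P hP, hxP, dist_eq_norm] using hf P hP

lemma le_div_sqrt_mul_sqrt {a L c d w : ℝ} (hc : 0 < c) (hL : 0 ≤ L) (hd : 0 ≤ d)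
    (ha : a ≤ L * d) (hw : c * d ^ 2 ≤ w) : a ≤ L / √c * √w := by
  have hcd : √c * d ≤ √w := by
    simpa [Real.sqrt_mul hc.le, Real.sqrt_sq hd] using Real.sqrt_le_sqrt hw
  calc a ≤ L * d := ha
    _ = L / √c * (√c * d) := by field_simp
    _ ≤ L / √c * √w := by gcongr

lemma exists_modulus_near_of_continuousOn {E X : Type*} [NormedAddCommGroup E] [ProperSpace E]
    [SeminormedAddCommGroup X] {K : Set E} (hK : IsCompact K) (hKne : K.Nonempty) {r M : ℝ}
    (hr : 0 < r) {g : E → X} (hg : ContinuousOn g {x | infDist x K < r})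
    (hM : ∀ x, infDist x K < r → ‖g x‖ ≤ M) :
    ∃ osc : ℝ → ℝ, (∀ δ, 0 ≤ osc δ) ∧ Tendsto osc (𝓝[>] 0) (𝓝 0) ∧
      ∀ δ ≤ r / 2, ∀ x y, infDist x K < δ → ‖y - x‖ < δ → ‖g y - g x‖ ≤ osc δ := by
  have hM0 : 0 ≤ M := by
    obtain ⟨k, hk⟩ := hKne
    exact (norm_nonneg _).trans (hM k (by rwa [infDist_zero_of_mem hk]))
  have hT : ∀ x, x ∈ cthickening (r / 2) K ↔ infDist x K ≤ r / 2 := fun x =>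
    mem_cthickening_iff_infDist_le hKne (by positivity)
  obtain ⟨ω, hω0, hω, hωT⟩ := hK.cthickening.exists_modulus_of_continuousOn
    (hg.mono fun x hx => ((hT x).1 hx).trans_lt (by linarith))
  -- `y` is within `2δ` of `K`, hence in the compact set `cthickening (r / 2) K` once `4δ ≤ r`
  refine ⟨fun δ => if 4 * δ ≤ r then ω δ else 2 * M, fun δ => ?_, ?_, fun δ hδ x y hx hyx => ?_⟩
  · dsimp only
    split_ifs
    exacts [hω0 δ, by positivity]
  · refine hω.congr' ?_
    filter_upwards [Ioo_mem_nhdsGT (by positivity : (0 : ℝ) < r / 4)] with δ hδ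
    rw [if_pos (by linarith [hδ.2])]
  · have hy : infDist y K < 2 * δ :=
      infDist_le_infDist_add_dist.trans_lt (by rw [dist_eq_norm]; linarith)
    dsimp only
    split_ifs with h4
    · rw [← dist_eq_norm]
      exact hωT δ y ((hT y).2 (by linarith)) x ((hT x).2 (by linarith))
        (by rw [dist_eq_norm]; exact hyx.le)
    · linarith [norm_sub_le (g y) (g x), hM y (by linarith), hM x (by linarith)]

theorem exists_taylor_bound_near_wells {E : Type*} [NormedAddCommGroup E] [NormedSpace ℝ E]
    [ProperSpace E] {c₁ L δW : ℝ} (hc1 : 0 < c₁) (hδW : 0 < δW) {K : Set E} (hK : IsCompact K)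
    (hKne : K.Nonempty) {W : E → ℝ} (hsmooth : ContDiffOn ℝ 2 W {F | infDist F K < δW})
    (hDvan : ∀ F ∈ K, fderiv ℝ W F = 0) (hcoer : ∀ F, c₁ * infDist F K ^ 2 ≤ W F)
    (hLip : ∀ F₁ ∈ {F | infDist F K < δW}, ∀ F₂ ∈ {F | infDist F K < δW},
      ‖fderiv ℝ W F₁ - fderiv ℝ W F₂‖ ≤ L * ‖F₁ - F₂‖) :
    ∃ C : ℝ, 0 < C ∧ ∃ ρ : ℝ → ℝ,
      (∀ δ ∈ Set.Ioc (0 : ℝ) (δW / 2), 0 < ρ δ) ∧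
      Tendsto ρ (𝓝[>] (0 : ℝ)) (𝓝 0) ∧
      ∀ δ ∈ Set.Ioc (0 : ℝ) (δW / 2),
        ∀ F, infDist F K < δ →
          ∀ G : E, ‖G‖ < δ →
            W (F + G) ≤ W F + C * Real.sqrt (W F) * ‖G‖
              + (1 / 2) * iteratedFDeriv ℝ 2 W F ![G, G] + ρ δ * ‖G‖ ^ 2 := by
  set V := {F | infDist F K < δW}
  set D2 := fderiv ℝ (fderiv ℝ W)
  have hVo : IsOpen V := isOpen_lt (continuous_infDist_pt K) continuous_const
  have hKV : K ⊆ V := fun x hx => by simp [V, infDist_zero_of_mem hx, hδW]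
  obtain ⟨L', hLip'⟩ : ∃ L' : NNReal, LipschitzOnWith L' (fderiv ℝ W) V :=
    ⟨L.toNNReal, LipschitzOnWith.of_dist_le_mul fun x hx y hy => by
      rw [dist_eq_norm, dist_eq_norm]
      exact (hLip x hx y hy).trans (by gcongr; exact Real.le_coe_toNNReal L)⟩
  have hC1 : ContDiffOn ℝ 1 (fderiv ℝ W) V := hsmooth.fderiv_of_isOpen hVo (by norm_num)
  have hW1 : ∀ x ∈ V, HasFDerivAt W (fderiv ℝ W x) x := fun x hx =>
    ((hsmooth.differentiableOn (by norm_num)).differentiableAt (hVo.mem_nhds hx)).hasFDerivAt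
  have hW2 : ∀ x ∈ V, HasFDerivAt (fderiv ℝ W) (D2 x) x := fun x hx =>
    ((hC1.differentiableOn one_ne_zero).differentiableAt (hVo.mem_nhds hx)).hasFDerivAt
  have hD2 : ∀ x ∈ V, ‖D2 x‖ ≤ L' := fun x hx =>
    (hW2 x hx).le_of_lipschitzOn (hVo.mem_nhds hx) hLip'
  have hDW : ∀ x ∈ V, ‖fderiv ℝ W x‖ ≤ L' / √c₁ * √(W x) := fun x hx =>
    le_div_sqrt_mul_sqrt hc1 L'.2 infDist_nonneg
      (norm_le_mul_infDist_of_eq_zero hK hKne hDvan fun y hy => hLip'.norm_sub_le hx (hKV hy))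
      (hcoer x)
  obtain ⟨osc, hosc0, hosc, hosc_le⟩ := exists_modulus_near_of_continuousOn hK hKne hδW
    (hC1.continuousOn_fderiv_of_isOpen hVo le_rfl) hD2
  refine ⟨L' / √c₁ + 1, by positivity, fun δ => osc δ + δ, fun δ hδ => by linarith [hosc0 δ, hδ.1],
    by simpa using hosc.add (tendsto_id.mono_left nhdsWithin_le_nhds), fun δ hδ F hF G hG => ?_⟩
  have hnear : ∀ y ∈ segment ℝ F (F + G), ‖y - F‖ < δ := fun y hy =>
    (norm_sub_le_of_mem_segment hy).trans_lt (by simpa using hG)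
  have hsegV : segment ℝ F (F + G) ⊆ V := fun y hy => show infDist y K < δW from
    infDist_le_infDist_add_dist.trans_lt (by rw [dist_eq_norm]; linarith [hnear y hy, hδ.2])
  have htaylor := abs_sub_taylor_two_le hVo hsegV hW1 hW2 fun y hy =>
    hosc_le δ hδ.2 F y hF (hnear y hy)
  have hfirst : fderiv ℝ W F G ≤ (L' / √c₁ + 1) * √(W F) * ‖G‖ :=
    calc fderiv ℝ W F G ≤ ‖fderiv ℝ W F‖ * ‖G‖ := (le_abs_self _).trans ((fderiv ℝ W F).le_opNorm G)
      _ ≤ L' / √c₁ * √(W F) * ‖G‖ := by gcongr; exact hDW F (hsegV (left_mem_segment ℝ F (F + G)))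
      _ ≤ (L' / √c₁ + 1) * √(W F) * ‖G‖ := by gcongr; linarith
  have hD2F : iteratedFDeriv ℝ 2 W F ![G, G] = D2 F G G := by
    simp [iteratedFDeriv_two_apply, D2]
  rw [hD2F, add_mul]
  linarith [(abs_le.1 htaylor).2, mul_nonneg hδ.1.le (sq_nonneg ‖G‖)]

theorem stmt5_general (n : ℕ) (c₁ L δW : ℝ) (hc1 : 0 < c₁) (hδW : 0 < δW)
    (A B : Matrix (Fin (n + 2)) (Fin (n + 2)) ℝ)
    (K : Set (Matrix (Fin (n + 2)) (Fin (n + 2)) ℝ))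
    (hK : K = (fun R => R * A) '' SO (n + 2) ∪ (fun R => R * B) '' SO (n + 2))
    (V : Set (Matrix (Fin (n + 2)) (Fin (n + 2)) ℝ))
    (hV : V = {F | Metric.infDist F K < δW})
    (W : Matrix (Fin (n + 2)) (Fin (n + 2)) ℝ → ℝ)
    (hsmooth : ContDiffOn ℝ 2 W V)
    (hDvan : ∀ F ∈ K, fderiv ℝ W F = 0)
    (hcoer : ∀ F, c₁ * Metric.infDist F K ^ 2 ≤ W F)
    (hLip : ∀ F₁ ∈ V, ∀ F₂ ∈ V, ‖@fderiv ℝ _ _ _ _ PseudoMetricSpace.toUniformSpace.toTopologicalSpace _ _ _ _ W F₁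
      - @fderiv ℝ _ _ _ _ PseudoMetricSpace.toUniformSpace.toTopologicalSpace _ _ _ _ W F₂‖ ≤ L * ‖F₁ - F₂‖) :
    ∃ C : ℝ, 0 < C ∧ ∃ ρ : ℝ → ℝ,
      (∀ δ ∈ Set.Ioc (0 : ℝ) (δW / 2), 0 < ρ δ) ∧
      Tendsto ρ (𝓝[>] (0 : ℝ)) (𝓝 0) ∧
      ∀ δ ∈ Set.Ioc (0 : ℝ) (δW / 2),
        ∀ F, Metric.infDist F K < δ →
          ∀ G : Matrix (Fin (n + 2)) (Fin (n + 2)) ℝ, ‖G‖ < δ →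
            W (F + G) ≤ W F + C * Real.sqrt (W F) * ‖G‖
              + (1 / 2) * iteratedFDeriv ℝ 2 W F ![G, G] + ρ δ * ‖G‖ ^ 2 := by
  subst hV
  have hSO := isCompact_SO (n + 2)
  have hKc : IsCompact K := hK ▸ (hSO.image (continuous_id.matrix_mul continuous_const)).union
    (hSO.image (continuous_id.matrix_mul continuous_const))
  have hKne : K.Nonempty := hK ▸ ⟨1 * A, Or.inl ⟨1, ⟨by simp, by simp⟩, rfl⟩⟩
  exact exists_taylor_bound_near_wells hc1 hδW hKc hKne hsmooth hDvan hcoer hLip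

/-- if `W` is C² on `V = {dist(·, SO(d){A,B}) < δ_W}`, vanishes together with
its derivative on the wells, is coercive, and `DW` is Lipschitz on `V`, then there are
`C > 0` and `ρ_δ > 0` with `ρ_δ → 0` as `δ → 0` such that for `0 < δ ≤ δ_W/2`,
`W(F + G) ≤ W(F) + C √(W(F)) |G| + ½ D²W(F)[G,G] + ρ_δ |G|²`
for all `F ∈ V_δ` and `|G| < δ`. -/
theorem stmt5 (n : ℕ) (κ c₁ L δW : ℝ) (hκ : 0 < κ) (hc1 : 0 < c₁) (hδW : 0 < δW)
    (A B : Matrix (Fin (n + 2)) (Fin (n + 2)) ℝ)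
    (hA : A = 1)
    (hB : B = 1 + κ • Matrix.single (Fin.last (n + 1)) (Fin.last (n + 1)) 1)
    (K : Set (Matrix (Fin (n + 2)) (Fin (n + 2)) ℝ))
    (hK : K = (fun R => R * A) '' SO (n + 2) ∪ (fun R => R * B) '' SO (n + 2))
    (V : Set (Matrix (Fin (n + 2)) (Fin (n + 2)) ℝ))
    (hV : V = {F | Metric.infDist F K < δW})
    (W : Matrix (Fin (n + 2)) (Fin (n + 2)) ℝ → ℝ)
    (hW0 : ∀ F, 0 ≤ W F)
    (hsmooth : ContDiffOn ℝ 2 W V)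
    (hvan : ∀ F ∈ K, W F = 0)
    (hDvan : ∀ F ∈ K, fderiv ℝ W F = 0)
    (hcoer : ∀ F, c₁ * Metric.infDist F K ^ 2 ≤ W F)
    (hLip : ∀ F₁ ∈ V, ∀ F₂ ∈ V, ‖@fderiv ℝ _ _ _ _ PseudoMetricSpace.toUniformSpace.toTopologicalSpace _ _ _ _ W F₁
      - @fderiv ℝ _ _ _ _ PseudoMetricSpace.toUniformSpace.toTopologicalSpace _ _ _ _ W F₂‖ ≤ L * ‖F₁ - F₂‖) :
    ∃ C : ℝ, 0 < C ∧ ∃ ρ : ℝ → ℝ,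
      (∀ δ ∈ Set.Ioc (0 : ℝ) (δW / 2), 0 < ρ δ) ∧
      Tendsto ρ (𝓝[>] (0 : ℝ)) (𝓝 0) ∧
      ∀ δ ∈ Set.Ioc (0 : ℝ) (δW / 2),
        ∀ F, Metric.infDist F K < δ →
          ∀ G : Matrix (Fin (n + 2)) (Fin (n + 2)) ℝ, ‖G‖ < δ →
            W (F + G) ≤ W F + C * Real.sqrt (W F) * ‖G‖
              + (1 / 2) * iteratedFDeriv ℝ 2 W F ![G, G] + ρ δ * ‖G‖ ^ 2 :=
  stmt5_general n c₁ L δW hc1 hδW A B K hK V hV W hsmooth hDvan hcoer hLip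
end

section
/- Let B − A = κ e_d ⊗ e_d with A = Id and κ > 0. The only solution of B − R A = a ⊗ ν with R ∈ SO(d), a, ν ∈ ℝ^d and |ν| = 1 is (up to the sign ambiguity (a,ν) ↦ (−a,−ν)) given by R = Id, ν = e_d, a = κ e_d. -/
open Matrix

/-- The last standard basis vector `e_d` of `ℝ^d` (here `d = n+2`). -/
noncomputable def lastBasis (n : ℕ) : Fin (n + 2) → ℝ := Pi.single (Fin.last (n + 1)) 1

/-!
On `ν^⊥` the matrix `R = Id + κ e ⊗ e - a ⊗ ν` acts as `x ↦ x + κ (e ⬝ x) e`, which lengthens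
every vector not orthogonal to `e`. An orthogonal `R` therefore forces `ν^⊥ ⊆ e^⊥`, i.e.
`ν = ±e`. Then `R = Id + b ⊗ e` is a rank-one perturbation of the identity, and
`det R = 1 + e ⬝ b = 1` together with `|R e| = |e|` gives `b = 0`.
-/

section

variable {ι : Type*} [Fintype ι]

theorem eq_or_eq_neg_of_forall_dotProduct_eq_zero {e ν : ι → ℝ} (he : e ⬝ᵥ e = 1)
    (hν : ν ⬝ᵥ ν = 1) (h : ∀ x, ν ⬝ᵥ x = 0 → e ⬝ᵥ x = 0) : ν = e ∨ ν = -e := by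
  set t := e ⬝ᵥ ν with ht
  have hνe : ν ⬝ᵥ e = t := dotProduct_comm ν e
  have ht_sq : t ^ 2 = 1 := by
    -- `e - t ν` is the projection of `e` onto `ν^⊥`
    have := h (e - t • ν) (by simp [dotProduct_sub, hνe, hν])
    simp only [dotProduct_sub, dotProduct_smul, he, ← ht, smul_eq_mul] at this
    linarith
  have hν_eq : ν = t • e := by
    rw [← sub_eq_zero, ← dotProduct_self_eq_zero]
    simp only [dotProduct_sub, sub_dotProduct, dotProduct_smul, smul_dotProduct, he, hν, hνe,
      ← ht, smul_eq_mul]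
    linear_combination -ht_sq
  rcases sq_eq_one_iff.mp ht_sq with h1 | h1
  · left; rw [hν_eq, h1, one_smul]
  · right; rw [hν_eq, h1, neg_one_smul]

variable [DecidableEq ι]

theorem dotProduct_mulVec_self_of_transpose_mul_self {α : Type*} [CommSemiring α]
    {R : Matrix ι ι α} (hR : Rᵀ * R = 1) (x : ι → α) :
    R *ᵥ x ⬝ᵥ R *ᵥ x = x ⬝ᵥ x := by
  rw [dotProduct_mulVec, vecMul_mulVec, hR, vecMul_one]

namespace RankOneConnection

variable {κ : ℝ} {e a ν x : ι → ℝ} {R : Matrix ι ι ℝ}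

theorem mulVec_of_dotProduct_eq_zero (h : 1 + κ • vecMulVec e e - R = vecMulVec a ν)
    (hx : ν ⬝ᵥ x = 0) : R *ᵥ x = x + (κ * (e ⬝ᵥ x)) • e := by
  rw [← sub_sub_cancel (1 + κ • vecMulVec e e) R, h]
  simp [sub_mulVec, add_mulVec, smul_mulVec, vecMulVec_mulVec, hx, smul_smul]

theorem dotProduct_eq_zero_of_dotProduct_eq_zero (hκ : 0 < κ) (he : e ⬝ᵥ e = 1)
    (hR : Rᵀ * R = 1) (h : 1 + κ • vecMulVec e e - R = vecMulVec a ν) (hx : ν ⬝ᵥ x = 0) :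
    e ⬝ᵥ x = 0 := by
  have hlen := dotProduct_mulVec_self_of_transpose_mul_self hR x
  rw [mulVec_of_dotProduct_eq_zero h hx] at hlen
  simp only [add_dotProduct, dotProduct_add, smul_dotProduct, dotProduct_smul, he,
    dotProduct_comm x e, smul_eq_mul] at hlen
  have : (2 * κ + κ ^ 2) * (e ⬝ᵥ x) ^ 2 = 0 := by linear_combination hlen
  simpa [hκ.ne', (by positivity : 2 * κ + κ ^ 2 ≠ 0)] using this

theorem eq_or_eq_neg (hκ : 0 < κ) (he : e ⬝ᵥ e = 1) (hν : ν ⬝ᵥ ν = 1) (hR : Rᵀ * R = 1)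
    (h : 1 + κ • vecMulVec e e - R = vecMulVec a ν) : ν = e ∨ ν = -e :=
  eq_or_eq_neg_of_forall_dotProduct_eq_zero he hν fun _ ↦
    dotProduct_eq_zero_of_dotProduct_eq_zero hκ he hR h

end RankOneConnection

end

theorem eq_zero_of_one_add_vecMulVec_mem_SO {d : ℕ} {b e : Fin d → ℝ} (he : e ≠ 0)
    (h : 1 + vecMulVec b e ∈ SO d) : b = 0 := by
  have heb : e ⬝ᵥ b = 0 := by
    have := h.2
    rwa [vecMulVec_eq Unit, det_one_add_replicateCol_mul_replicateRow, add_eq_left] at this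
  have hlen := dotProduct_mulVec_self_of_transpose_mul_self (mul_eq_one_comm.mp h.1) e
  simp only [add_mulVec, one_mulVec, vecMulVec_mulVec, op_smul_eq_smul, add_dotProduct,
    dotProduct_add, smul_dotProduct, dotProduct_smul, heb, dotProduct_comm b e,
    smul_eq_mul] at hlen
  have hee : e ⬝ᵥ e ≠ 0 := dotProduct_self_eq_zero.not.mpr he
  have : (e ⬝ᵥ e) ^ 2 * (b ⬝ᵥ b) = 0 := by linear_combination hlen
  simpa [hee] using this

theorem rankOneConnection_unique {d : ℕ} {κ : ℝ} (hκ : 0 < κ) {e a ν : Fin d → ℝ}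
    (he : e ⬝ᵥ e = 1) (hν : ν ⬝ᵥ ν = 1) {R : Matrix (Fin d) (Fin d) ℝ} (hR : R ∈ SO d)
    (h : 1 + κ • vecMulVec e e - R = vecMulVec a ν) :
    R = 1 ∧ (a = κ • e ∧ ν = e ∨ a = -(κ • e) ∧ ν = -e) := by
  have he0 : e ≠ 0 := by rintro rfl; simp at he
  have hR_eq : R = 1 + vecMulVec (κ • e) e - vecMulVec a ν := by
    rw [← h, smul_vecMulVec, sub_sub_cancel]
  have hR_one {b : Fin d → ℝ} (hb : R = 1 + vecMulVec b e) : b = 0 ∧ R = 1 := by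
    have hb0 := eq_zero_of_one_add_vecMulVec_mem_SO he0 (hb ▸ hR)
    exact ⟨hb0, by rw [hb, hb0, zero_vecMulVec, add_zero]⟩
  rcases RankOneConnection.eq_or_eq_neg hκ he hν (mul_eq_one_comm.mp hR.1) h with hνe | hνe
  · obtain ⟨hb, hR1⟩ := hR_one (b := κ • e - a)
      (by rw [hR_eq, hνe, sub_vecMulVec, add_sub_assoc])
    exact ⟨hR1, .inl ⟨(sub_eq_zero.mp hb).symm, hνe⟩⟩
  · obtain ⟨hb, hR1⟩ := hR_one (b := κ • e + a)
      (by rw [hR_eq, hνe, vecMulVec_neg, sub_neg_eq_add, add_vecMulVec, add_assoc])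
    exact ⟨hR1, .inr ⟨(add_eq_zero_iff_neg_eq.mp hb).symm, hνe⟩⟩

/-- with `A = Id`, `B = Id + κ e_d ⊗ e_d`, `κ > 0`, the only solution of
`B − R A = a ⊗ ν` with `R ∈ SO(d)`, `|ν| = 1`, is (up to `(a,ν) ↦ (−a,−ν)`) given by
`R = Id`, `ν = e_d`, `a = κ e_d`. -/
theorem stmt6 (n : ℕ) (κ : ℝ) (hκ : 0 < κ)
    (A B : Matrix (Fin (n + 2)) (Fin (n + 2)) ℝ)
    (hA : A = 1)
    (hB : B = 1 + κ • Matrix.single (Fin.last (n + 1)) (Fin.last (n + 1)) 1)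
    (R : Matrix (Fin (n + 2)) (Fin (n + 2)) ℝ) (hR : R ∈ SO (n + 2))
    (a ν : Fin (n + 2) → ℝ) (hν : ∑ i, ν i ^ 2 = 1)
    (h : B - R * A = Matrix.vecMulVec a ν) :
    R = 1 ∧
      ((a = κ • lastBasis n ∧ ν = lastBasis n) ∨
       (a = -(κ • lastBasis n) ∧ ν = -lastBasis n)) := by
  subst hA hB
  rw [mul_one, single_eq_single_vecMulVec_single] at h
  have he : lastBasis n ⬝ᵥ lastBasis n = 1 := by simp [lastBasis]
  have hν' : ν ⬝ᵥ ν = 1 := by simpa [dotProduct, sq] using hν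
  exact rankOneConnection_unique hκ he hν' hR h
end
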